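/- Let G be a topological group. Suppose that (a) there is exactly one left-invariant mean on Ub(rG) (G is uniquely amenable), and (b) every element of the topological centre of Meas(rG) is a uniform measure, i.e., every ξ ∈ Meas(rG) for which the map ν ↦ ξ ⋆ ν is continuous from Meas(rG) with the weak-* topology to itself is a uniform measure. Then G is precompact, i.e., the right uniformity of G is totally bounded. -/

import Mathlib

noncomputable section

open Filter Topology

/-- `f` is a bounded uniformly continuous real-valued function,
i.e. a member of `Ub(X)`. -/
def IsUb {X : Type*} [UniformSpace X] (f : X → ℝ) : Prop :=
  UniformContinuous f ∧ ∃ C : ℝ, ∀ x, |f x| ≤ C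

/-- Supremum norm of a real-valued function. -/
def supNorm {α : Type*} (f : α → ℝ) : ℝ :=
  sSup (Set.range fun x => |f x|)

/-- `μ` is (the restriction to `Ub(X)` of) a norm-continuous linear functional on `Ub(X)`,
i.e. a member of `Meas(X)`.  It is represented as a bare map on all functions;
only its values on `Ub(X)` are relevant. -/
def IsMeas {X : Type*} [UniformSpace X] (μ : (X → ℝ) → ℝ) : Prop :=
  (∀ f g : X → ℝ, IsUb f → IsUb g → μ (f + g) = μ f + μ g) ∧
  (∀ (c : ℝ) (f : X → ℝ), IsUb f → μ (c • f) = c * μ f) ∧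
  (∃ C : ℝ, ∀ f : X → ℝ, IsUb f → (∀ x, |f x| ≤ 1) → |μ f| ≤ C)

/-- The dual norm on `Meas(X)`:  `‖μ‖ = sup {|μ f| : f ∈ Ub(X), ‖f‖ ≤ 1}`. -/
def measNorm {X : Type*} [UniformSpace X] (μ : (X → ℝ) → ℝ) : ℝ :=
  sSup {r : ℝ | ∃ f : X → ℝ, IsUb f ∧ (∀ x, |f x| ≤ 1) ∧ r = |μ f|}

/-- `μ` is a positive functional:  `μ f ≥ 0` whenever `f ∈ Ub(X)` and `f ≥ 0`. -/
def IsPositive {X : Type*} [UniformSpace X] (μ : (X → ℝ) → ℝ) : Prop :=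
  ∀ f : X → ℝ, IsUb f → (∀ x, 0 ≤ f x) → 0 ≤ μ f

/-- `μ` is a *uniform measure*: on every norm-bounded uniformly equicontinuous set
`H ⊆ Ub(X)`, `μ` is continuous for the topology of pointwise convergence. -/
def IsUniformMeasure {X : Type*} [UniformSpace X] (μ : (X → ℝ) → ℝ) : Prop :=
  ∀ H : Set (X → ℝ),
    (∃ C : ℝ, ∀ f ∈ H, ∀ x, |f x| ≤ C) →
    H.UniformEquicontinuous →
    ∀ f₀ ∈ H, ∀ ε : ℝ, 0 < ε →
      ∃ (K : Finset X) (δ : ℝ), 0 < δ ∧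
        ∀ f ∈ H, (∀ x ∈ K, |f x - f₀ x| < δ) → |μ f - μ f₀| < ε

/-- A *semiuniform* function on `X × Y`, i.e. a member of `Ub(X ⋉ Y)` where `X ⋉ Y` is the
semiuniform product: `f` is bounded, the family of sections `x ↦ f (x, y)` (for `y ∈ Y`)
is uniformly equicontinuous on `X`, and every section `y ↦ f (x, y)` is uniformly
continuous on `Y`. -/
def Semiuniform {X Y : Type*} [UniformSpace X] [UniformSpace Y] (f : X × Y → ℝ) : Prop :=
  (∃ C : ℝ, ∀ p, |f p| ≤ C) ∧
  UniformEquicontinuous (fun y : Y => fun x : X => f (x, y)) ∧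
  ∀ x : X, UniformContinuous fun y : Y => f (x, y)

/-- The direct product `μ ⊗ ν`, evaluated at `f : X × Y → ℝ`:
`(μ ⊗ ν)(f) = μ (x ↦ ν (y ↦ f (x, y)))`. -/
def dirProd {X Y : Type*} (μ : (X → ℝ) → ℝ) (ν : (Y → ℝ) → ℝ) (f : X × Y → ℝ) : ℝ :=
  μ fun x => ν fun y => f (x, y)

/-- Convolution: `(μ ⋆ ν)(f) = μ (x ↦ ν (y ↦ f (x · y)))`. -/
def conv {G : Type*} [Mul G] (μ ν : (G → ℝ) → ℝ) : (G → ℝ) → ℝ :=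
  fun f => μ fun x => ν fun y => f (x * y)

/-- The weak-* topology on `Meas(X)`: the topology of pointwise convergence on `Ub(X)`. -/
def weakStarMeas (X : Type*) [UniformSpace X] :
    TopologicalSpace {ν : (X → ℝ) → ℝ // IsMeas ν} :=
  TopologicalSpace.induced
    (fun ν => fun f : {f : X → ℝ // IsUb f} => ν.1 f.1) Pi.topologicalSpace


/-!
Uniqueness of the left-invariant mean `m` makes it right invariant, and makes every left-invariant
positive functional a multiple of `m`. Splitting `ν ∈ Meas(rG)` into positive parts (Jordan
decomposition) then gives `m ⋆ ν = ν(1) · m`, which is weak-* continuous in `ν`; so `m` lies in the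
topological centre and is a uniform measure.

If `G` were not precompact, some neighbourhood `V` of `1` would admit arbitrarily large finite sets
of pairwise `V`-apart points. Right translates of a bump `u` supported near `1` by such points have
disjoint supports, so by right invariance `n · m u ≤ 1` for all `n`: `m` kills every right
translate of `u`. The finite suprema of these translates form a bounded uniformly equicontinuous
family that converges pointwise to `1` while all their means vanish, so `m` is not a uniform
measure.
-/

open scoped Uniformity

section Ub

variable {X Y : Type*} [UniformSpace X] [UniformSpace Y] {f g : X → ℝ}

theorem isUb_const (c : ℝ) : IsUb (fun _ : X => c) :=
  ⟨uniformContinuous_const, |c|, fun _ => le_rfl⟩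

theorem IsUb.add (hf : IsUb f) (hg : IsUb g) : IsUb (f + g) := by
  obtain ⟨Cf, hCf⟩ := hf.2
  obtain ⟨Cg, hCg⟩ := hg.2
  exact ⟨hf.1.add hg.1, Cf + Cg, fun x => (abs_add_le _ _).trans (add_le_add (hCf x) (hCg x))⟩

theorem IsUb.const_smul (hf : IsUb f) (c : ℝ) : IsUb (c • f) := by
  obtain ⟨C, hC⟩ := hf.2
  refine ⟨hf.1.const_mul' c, |c| * C, fun x => ?_⟩
  rw [Pi.smul_apply, smul_eq_mul, abs_mul]
  exact mul_le_mul_of_nonneg_left (hC x) (abs_nonneg c)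

theorem IsUb.neg (hf : IsUb f) : IsUb (-f) := by
  simpa using hf.const_smul (-1)

theorem IsUb.sub (hf : IsUb f) (hg : IsUb g) : IsUb (f - g) := by
  simpa [sub_eq_add_neg] using hf.add hg.neg

theorem IsUb.max (hf : IsUb f) (hg : IsUb g) : IsUb (fun x => max (f x) (g x)) := by
  obtain ⟨Cf, hCf⟩ := hf.2
  obtain ⟨Cg, hCg⟩ := hg.2
  exact ⟨lipschitzWith_max.uniformContinuous.comp (hf.1.prodMk hg.1), Max.max Cf Cg,
    fun x => abs_max_le_max_abs_abs.trans (max_le_max (hCf x) (hCg x))⟩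

theorem IsUb.min (hf : IsUb f) (hg : IsUb g) : IsUb (fun x => min (f x) (g x)) := by
  convert (hf.neg.max hg.neg).neg using 1
  ext x
  simp [max_neg_neg]

theorem IsUb.posPart (hf : IsUb f) : IsUb f⁺ := by
  convert hf.max (isUb_const 0) using 1
  ext x
  simp [posPart_def]

theorem IsUb.negPart (hf : IsUb f) : IsUb f⁻ := by
  convert hf.neg.max (isUb_const 0) using 1
  ext x
  simp [negPart_def]

theorem IsUb.sum {ι : Type*} {s : Finset ι} {F : ι → X → ℝ} (hF : ∀ i ∈ s, IsUb (F i)) :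
    IsUb (∑ i ∈ s, F i) := by
  classical
  induction s using Finset.induction_on with
  | empty => exact isUb_const 0
  | insert a s ha ih =>
    rw [Finset.sum_insert ha]
    exact (hF a (s.mem_insert_self a)).add (ih fun i hi => hF i (Finset.mem_insert_of_mem hi))

theorem UniformContinuous.isUb_of_mem_Icc (hf : UniformContinuous f)
    (hf01 : ∀ x, f x ∈ Set.Icc (0 : ℝ) 1) : IsUb f :=
  ⟨hf, 1, fun x => abs_le.2 ⟨by linarith [(hf01 x).1], (hf01 x).2⟩⟩

theorem IsUb.comp (hf : IsUb f) {φ : Y → X} (hφ : UniformContinuous φ) : IsUb (f ∘ φ) := by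
  obtain ⟨C, hC⟩ := hf.2
  exact ⟨hf.1.comp hφ, C, fun y => hC (φ y)⟩

end Ub

namespace IsMeas

variable {X : Type*} [UniformSpace X] {μ : (X → ℝ) → ℝ} {f g : X → ℝ}

theorem map_add (hμ : IsMeas μ) (hf : IsUb f) (hg : IsUb g) : μ (f + g) = μ f + μ g :=
  hμ.1 f g hf hg

theorem map_smul (hμ : IsMeas μ) (c : ℝ) (hf : IsUb f) : μ (c • f) = c * μ f :=
  hμ.2.1 c f hf

theorem map_zero (hμ : IsMeas μ) : μ 0 = 0 := by
  simpa using hμ.map_smul 0 (isUb_const (X := X) 0)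

theorem map_neg (hμ : IsMeas μ) (hf : IsUb f) : μ (-f) = -μ f := by
  simpa using hμ.map_smul (-1) hf

theorem map_sub (hμ : IsMeas μ) (hf : IsUb f) (hg : IsUb g) : μ (f - g) = μ f - μ g := by
  rw [sub_eq_add_neg, hμ.map_add hf hg.neg, hμ.map_neg hg, sub_eq_add_neg]

theorem map_const (hμ : IsMeas μ) (c : ℝ) : μ (fun _ => c) = c * μ (fun _ => 1) := by
  convert hμ.map_smul c (isUb_const (X := X) 1) using 2
  ext x
  simp

theorem map_sum (hμ : IsMeas μ) {ι : Type*} {s : Finset ι} {F : ι → X → ℝ}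
    (hF : ∀ i ∈ s, IsUb (F i)) : μ (∑ i ∈ s, F i) = ∑ i ∈ s, μ (F i) := by
  classical
  induction s using Finset.induction_on with
  | empty => simpa using hμ.map_zero
  | insert a s ha ih =>
    have hs : ∀ i ∈ s, IsUb (F i) := fun i hi => hF i (Finset.mem_insert_of_mem hi)
    rw [Finset.sum_insert ha, Finset.sum_insert ha,
      hμ.map_add (hF a (s.mem_insert_self a)) (IsUb.sum hs), ih hs]

theorem exists_abs_le (hμ : IsMeas μ) :
    ∃ C, 0 ≤ C ∧ ∀ f : X → ℝ, IsUb f → ∀ B, 0 < B → (∀ x, |f x| ≤ B) → |μ f| ≤ C * B := by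
  obtain ⟨C, hC⟩ := hμ.2.2
  refine ⟨max C 0, le_max_right _ _, fun f hf B hB hfB => ?_⟩
  have hscaled : |μ (B⁻¹ • f)| ≤ C := hC _ (hf.const_smul _) fun x => by
    rw [Pi.smul_apply, smul_eq_mul, abs_mul, abs_inv, abs_of_pos hB]
    exact inv_mul_le_one_of_le₀ (hfB x) hB.le
  rw [hμ.map_smul _ hf, abs_mul, abs_inv, abs_of_pos hB, inv_mul_le_iff₀ hB] at hscaled
  nlinarith [le_max_left C 0]

theorem mono (hμ : IsMeas μ) (hpos : IsPositive μ) (hf : IsUb f) (hg : IsUb g) (h : f ≤ g) :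
    μ f ≤ μ g := by
  have := hpos (g - f) (hg.sub hf) fun x => sub_nonneg.2 (h x)
  rw [hμ.map_sub hg hf] at this
  linarith

theorem abs_le_of_isPositive (hμ : IsMeas μ) (hpos : IsPositive μ) (hf : IsUb f) {B : ℝ}
    (hB : ∀ x, |f x| ≤ B) : |μ f| ≤ B * μ (fun _ => 1) := by
  rw [← hμ.map_const, abs_le, ← hμ.map_neg (isUb_const B)]
  exact ⟨hμ.mono hpos (isUb_const B).neg hf fun x => (abs_le.1 (hB x)).1,
    hμ.mono hpos hf (isUb_const B) fun x => (abs_le.1 (hB x)).2⟩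

theorem eq_zero_of_le_sum (hμ : IsMeas μ) (hpos : IsPositive μ) {ι : Type*} {s : Finset ι}
    {F : ι → X → ℝ} (hF : ∀ i ∈ s, IsUb (F i)) (hnull : ∀ i ∈ s, μ (F i) = 0) (hf : IsUb f)
    (hf0 : 0 ≤ f) (hle : f ≤ ∑ i ∈ s, F i) : μ f = 0 := by
  refine le_antisymm ?_ (hpos f hf hf0)
  calc μ f ≤ μ (∑ i ∈ s, F i) := hμ.mono hpos hf (IsUb.sum hF) hle
    _ = 0 := by rw [hμ.map_sum hF, Finset.sum_eq_zero hnull]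

theorem sub {ν : (X → ℝ) → ℝ} (hμ : IsMeas μ) (hν : IsMeas ν) : IsMeas (μ - ν) := by
  obtain ⟨Cμ, hCμ⟩ := hμ.2.2
  obtain ⟨Cν, hCν⟩ := hν.2.2
  refine ⟨fun f g hf hg => ?_, fun c f hf => ?_, Cμ + Cν, fun f hf h1 => ?_⟩
  · simp only [Pi.sub_apply, hμ.map_add hf hg, hν.map_add hf hg]
    ring
  · simp only [Pi.sub_apply, hμ.map_smul c hf, hν.map_smul c hf]
    ring
  · exact (abs_sub _ _).trans (add_le_add (hCμ f hf h1) (hCν f hf h1))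

theorem const_smul (hμ : IsMeas μ) (c : ℝ) : IsMeas (c • μ) := by
  obtain ⟨C, hC⟩ := hμ.2.2
  refine ⟨fun f g hf hg => ?_, fun a f hf => ?_, |c| * C, fun f hf h1 => ?_⟩
  · simp only [Pi.smul_apply, smul_eq_mul, hμ.map_add hf hg]
    ring
  · simp only [Pi.smul_apply, smul_eq_mul, hμ.map_smul a hf]
    ring
  · rw [Pi.smul_apply, smul_eq_mul, abs_mul]
    exact mul_le_mul_of_nonneg_left (hC f hf h1) (abs_nonneg c)

theorem comp_uniformContinuous {Y : Type*} [UniformSpace Y] (hμ : IsMeas μ) {φ : X → Y}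
    (hφ : UniformContinuous φ) : IsMeas (fun g => μ (g ∘ φ)) := by
  obtain ⟨C, hC⟩ := hμ.2.2
  exact ⟨fun f g hf hg => hμ.map_add (hf.comp hφ) (hg.comp hφ),
    fun c f hf => hμ.map_smul c (hf.comp hφ), C, fun f hf h1 => hC _ (hf.comp hφ) fun x => h1 _⟩

end IsMeas

theorem Semiuniform.isUb_apply {X Y : Type*} [UniformSpace X] [UniformSpace Y]
    {F : X × Y → ℝ} (hF : Semiuniform F) {ν : (Y → ℝ) → ℝ} (hν : IsMeas ν) :
    IsUb (fun x => ν (fun y => F (x, y))) := by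
  obtain ⟨C, hC0, hCν⟩ := hν.exists_abs_le
  obtain ⟨⟨B, hB⟩, hequi, hsec⟩ := hF
  have hsecUb : ∀ x, IsUb (fun y => F (x, y)) := fun x => ⟨hsec x, B, fun y => hB _⟩
  refine ⟨Metric.uniformity_basis_dist.tendsto_right_iff.2 fun ε hε => ?_, C * (|B| + 1),
    fun x => hCν _ (hsecUb x) _ (by positivity) fun y => (hB _).trans (by linarith [le_abs_self B])⟩
  have hε' : 0 < ε / (C + 1) := by positivity
  filter_upwards [Metric.uniformEquicontinuous_iff_right.1 hequi _ hε'] with p hp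
  rw [Real.dist_eq, ← hν.map_sub (hsecUb p.1) (hsecUb p.2)]
  calc _ ≤ C * (ε / (C + 1)) :=
        hCν _ ((hsecUb p.1).sub (hsecUb p.2)) _ hε' fun y => (hp y).le
    _ < ε := by
        rw [mul_div_assoc', div_lt_iff₀ (by positivity)]
        nlinarith

section Jordan

variable {X : Type*} [UniformSpace X] {μ : (X → ℝ) → ℝ} {f g : X → ℝ}

/-- Only meaningful for `0 ≤ f`; `jordanPos` extends it linearly. -/
def posVariation (μ : (X → ℝ) → ℝ) (f : X → ℝ) : ℝ :=
  sSup (μ '' {g | IsUb g ∧ 0 ≤ g ∧ g ≤ f})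

theorem le_posVariation (hμ : IsMeas μ) (hf : IsUb f) (hg : IsUb g) (hg0 : 0 ≤ g)
    (hgf : g ≤ f) : μ g ≤ posVariation μ f := by
  refine le_csSup ?_ ⟨g, ⟨hg, hg0, hgf⟩, rfl⟩
  obtain ⟨C, -, hC⟩ := hμ.exists_abs_le
  obtain ⟨B, hB⟩ := hf.2
  refine ⟨C * (|B| + 1), ?_⟩
  rintro _ ⟨h, ⟨hh, hh0, hhf⟩, rfl⟩
  refine (le_abs_self _).trans (hC h hh _ (by positivity) fun x => ?_)
  rw [abs_of_nonneg (hh0 x)]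
  linarith [hhf x, le_abs_self (f x), hB x, le_abs_self B]

theorem posVariation_le (hf0 : 0 ≤ f) {r : ℝ}
    (h : ∀ g, IsUb g → 0 ≤ g → g ≤ f → μ g ≤ r) : posVariation μ f ≤ r :=
  csSup_le ⟨μ 0, 0, ⟨isUb_const 0, le_rfl, hf0⟩, rfl⟩ <| by
    rintro _ ⟨g, ⟨hg, hg0, hgf⟩, rfl⟩
    exact h g hg hg0 hgf

theorem posVariation_nonneg (hμ : IsMeas μ) (hf : IsUb f) (hf0 : 0 ≤ f) :
    0 ≤ posVariation μ f :=
  hμ.map_zero ▸ le_posVariation hμ hf (isUb_const 0) le_rfl hf0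

theorem posVariation_zero (hμ : IsMeas μ) : posVariation μ (0 : X → ℝ) = 0 :=
  le_antisymm (posVariation_le le_rfl fun g _ hg0 hg => by
      rw [le_antisymm hg hg0, hμ.map_zero])
    (posVariation_nonneg hμ (isUb_const 0) le_rfl)

/-- Riesz decomposition: every `0 ≤ h ≤ f + g` splits as `min h f + (h - min h f)`. -/
theorem posVariation_add (hμ : IsMeas μ) (hf : IsUb f) (hg : IsUb g) (hf0 : 0 ≤ f)
    (hg0 : 0 ≤ g) : posVariation μ (f + g) = posVariation μ f + posVariation μ g := by
  apply le_antisymm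
  · refine posVariation_le (add_nonneg hf0 hg0) fun h hh hh0 hhfg => ?_
    have hmin : IsUb (fun x => min (h x) (f x)) := hh.min hf
    have hsplit : h = (fun x => min (h x) (f x)) + (h - fun x => min (h x) (f x)) := by
      simp
    rw [hsplit, hμ.map_add hmin (hh.sub hmin)]
    gcongr
    · exact le_posVariation hμ hf hmin (fun x => le_min (hh0 x) (hf0 x)) fun x => min_le_right _ _
    · refine le_posVariation hμ hg (hh.sub hmin) (fun x => sub_nonneg.2 (min_le_left _ _))
        fun x => ?_
      have := hhfg x
      simp only [Pi.sub_apply, Pi.add_apply] at this ⊢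
      rcases le_total (h x) (f x) with hx | hx
      · rw [min_eq_left hx, sub_self]; exact hg0 x
      · rw [min_eq_right hx]; linarith
  · have hsum : ∀ g₁, IsUb g₁ → 0 ≤ g₁ → g₁ ≤ f → ∀ g₂, IsUb g₂ → 0 ≤ g₂ → g₂ ≤ g →
        μ g₁ + μ g₂ ≤ posVariation μ (f + g) := fun g₁ h₁ h₁0 h₁f g₂ h₂ h₂0 h₂g =>
      hμ.map_add h₁ h₂ ▸ le_posVariation hμ (hf.add hg) (h₁.add h₂) (add_nonneg h₁0 h₂0)
        (add_le_add h₁f h₂g)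
    have hg_le : posVariation μ g ≤ posVariation μ (f + g) - posVariation μ f :=
      posVariation_le hg0 fun g₂ h₂ h₂0 h₂g => by
        have : posVariation μ f ≤ posVariation μ (f + g) - μ g₂ :=
          posVariation_le hf0 fun g₁ h₁ h₁0 h₁f => by linarith [hsum g₁ h₁ h₁0 h₁f g₂ h₂ h₂0 h₂g]
        linarith
    linarith

theorem posVariation_smul_le (hμ : IsMeas μ) (hf : IsUb f) (hf0 : 0 ≤ f) {c : ℝ} (hc : 0 < c) :
    posVariation μ (c • f) ≤ c * posVariation μ f := by
  refine posVariation_le (smul_nonneg hc.le hf0) fun g hg hg0 hgf => ?_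
  have hg' : c⁻¹ • g ≤ f := fun x => by
    simpa [inv_mul_le_iff₀ hc] using hgf x
  calc μ g = c * μ (c⁻¹ • g) := by rw [hμ.map_smul _ hg, mul_inv_cancel_left₀ hc.ne']
    _ ≤ c * posVariation μ f := by
        gcongr
        exact le_posVariation hμ hf (hg.const_smul _) (smul_nonneg (inv_nonneg.2 hc.le) hg0) hg'

theorem posVariation_smul (hμ : IsMeas μ) (hf : IsUb f) (hf0 : 0 ≤ f) {c : ℝ} (hc : 0 < c) :
    posVariation μ (c • f) = c * posVariation μ f := by
  refine le_antisymm (posVariation_smul_le hμ hf hf0 hc) ?_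
  have := posVariation_smul_le hμ (hf.const_smul c) (smul_nonneg hc.le hf0) (inv_pos.2 hc)
  rw [inv_smul_smul₀ hc.ne'] at this
  calc c * posVariation μ f ≤ c * (c⁻¹ * posVariation μ (c • f)) := by gcongr
    _ = posVariation μ (c • f) := mul_inv_cancel_left₀ hc.ne' _

def jordanPos (μ : (X → ℝ) → ℝ) (f : X → ℝ) : ℝ :=
  posVariation μ f⁺ - posVariation μ f⁻

theorem jordanPos_eq_sub (hμ : IsMeas μ) {g h : X → ℝ} (hg : IsUb g) (hh : IsUb h) (hg0 : 0 ≤ g)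
    (hh0 : 0 ≤ h) (hf : IsUb f) (hgh : g - h = f) :
    jordanPos μ f = posVariation μ g - posVariation μ h := by
  rw [← posPart_sub_negPart f, sub_eq_sub_iff_add_eq_add] at hgh
  have := congrArg (posVariation μ) hgh
  rw [posVariation_add hμ hg hf.negPart hg0 (negPart_nonneg f),
    posVariation_add hμ hf.posPart hh (posPart_nonneg f) hh0] at this
  rw [jordanPos]
  linarith

theorem jordanPos_of_nonneg (hμ : IsMeas μ) (hf : IsUb f) (hf0 : 0 ≤ f) :
    jordanPos μ f = posVariation μ f := by
  rw [jordanPos_eq_sub hμ (h := 0) hf (isUb_const 0) hf0 le_rfl hf (sub_zero f),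
    posVariation_zero hμ, sub_zero]

theorem jordanPos_add (hμ : IsMeas μ) (hf : IsUb f) (hg : IsUb g) :
    jordanPos μ (f + g) = jordanPos μ f + jordanPos μ g := by
  rw [jordanPos_eq_sub hμ (hf.posPart.add hg.posPart) (hf.negPart.add hg.negPart)
    (add_nonneg (posPart_nonneg f) (posPart_nonneg g))
    (add_nonneg (negPart_nonneg f) (negPart_nonneg g)) (hf.add hg)
    (by rw [add_sub_add_comm, posPart_sub_negPart, posPart_sub_negPart]),
    posVariation_add hμ hf.posPart hg.posPart (posPart_nonneg f) (posPart_nonneg g),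
    posVariation_add hμ hf.negPart hg.negPart (negPart_nonneg f) (negPart_nonneg g),
    jordanPos, jordanPos]
  ring

theorem jordanPos_smul (hμ : IsMeas μ) (c : ℝ) (hf : IsUb f) :
    jordanPos μ (c • f) = c * jordanPos μ f := by
  rcases lt_trichotomy c 0 with hc | rfl | hc
  · rw [jordanPos_eq_sub hμ (hf.negPart.const_smul (-c)) (hf.posPart.const_smul (-c))
      (smul_nonneg (neg_nonneg.2 hc.le) (negPart_nonneg f))
      (smul_nonneg (neg_nonneg.2 hc.le) (posPart_nonneg f)) (hf.const_smul c)
      (by rw [← smul_sub, neg_smul, ← smul_neg, neg_sub, posPart_sub_negPart]),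
      posVariation_smul hμ hf.negPart (negPart_nonneg f) (neg_pos.2 hc),
      posVariation_smul hμ hf.posPart (posPart_nonneg f) (neg_pos.2 hc), jordanPos]
    ring
  · simp [jordanPos]
  · rw [jordanPos_eq_sub hμ (hf.posPart.const_smul c) (hf.negPart.const_smul c)
      (smul_nonneg hc.le (posPart_nonneg f)) (smul_nonneg hc.le (negPart_nonneg f))
      (hf.const_smul c) (by rw [← smul_sub, posPart_sub_negPart]),
      posVariation_smul hμ hf.posPart (posPart_nonneg f) hc,
      posVariation_smul hμ hf.negPart (negPart_nonneg f) hc, jordanPos]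
    ring

theorem posVariation_le_of_le_one {C : ℝ}
    (hC : ∀ g : X → ℝ, IsUb g → (∀ x, |g x| ≤ 1) → |μ g| ≤ C) (hf0 : 0 ≤ f)
    (hf1 : ∀ x, f x ≤ 1) : posVariation μ f ≤ C :=
  posVariation_le hf0 fun g hg hg0 hgf =>
    (le_abs_self _).trans (hC g hg fun x => abs_le.2
      ⟨by linarith [show (0 : ℝ) ≤ g x from hg0 x], (hgf x).trans (hf1 x)⟩)

theorem isMeas_jordanPos (hμ : IsMeas μ) : IsMeas (jordanPos μ) := by
  refine ⟨fun f g hf hg => jordanPos_add hμ hf hg, fun c f hf => jordanPos_smul hμ c hf, ?_⟩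
  obtain ⟨C, hC⟩ := hμ.2.2
  refine ⟨C, fun f hf hf1 => ?_⟩
  have hpos := posVariation_le_of_le_one hC (posPart_nonneg f) fun x => by
    rw [Pi.posPart_apply]
    linarith [posPart_add_negPart (f x), negPart_nonneg (f x), hf1 x]
  have hneg := posVariation_le_of_le_one hC (negPart_nonneg f) fun x => by
    rw [Pi.negPart_apply]
    linarith [posPart_add_negPart (f x), posPart_nonneg (f x), hf1 x]
  have := posVariation_nonneg hμ hf.posPart (posPart_nonneg f)
  have := posVariation_nonneg hμ hf.negPart (negPart_nonneg f)
  rw [jordanPos, abs_le]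
  constructor <;> linarith

theorem isPositive_jordanPos (hμ : IsMeas μ) : IsPositive (jordanPos μ) := fun f hf hf0 => by
  rw [jordanPos_of_nonneg hμ hf hf0]
  exact posVariation_nonneg hμ hf hf0

theorem IsMeas.exists_isPositive_sub (hμ : IsMeas μ) :
    ∃ μ₁ μ₂ : (X → ℝ) → ℝ, IsMeas μ₁ ∧ IsPositive μ₁ ∧ IsMeas μ₂ ∧ IsPositive μ₂ ∧
      ∀ f, IsUb f → μ f = μ₁ f - μ₂ f := by
  refine ⟨jordanPos μ, jordanPos μ - μ, isMeas_jordanPos hμ, isPositive_jordanPos hμ,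
    (isMeas_jordanPos hμ).sub hμ, fun f hf hf0 => ?_, fun f _ => by simp⟩
  rw [Pi.sub_apply, sub_nonneg, jordanPos_of_nonneg hμ hf hf0]
  exact le_posVariation hμ hf hf hf0 le_rfl

end Jordan

section Bump

open scoped SetRel

variable {X : Type*} [UniformSpace X]

theorem exists_pseudoMetricSpace_of_mem_uniformity {U : Set (X × X)} (hU : U ∈ 𝓤 X) :
    ∃ d : PseudoMetricSpace X, 𝓤 X ≤ 𝓤[d.toUniformSpace] ∧ U ∈ 𝓤[d.toUniformSpace] := by
  choose! next hnext_mem hnext_symm hnext_comp using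
    fun V (hV : V ∈ 𝓤 X) => comp_symm_mem_uniformity_sets hV
  set seq : ℕ → Set (X × X) := fun n => next^[n + 1] U
  have hseq_mem : ∀ n, seq n ∈ 𝓤 X := fun n => by
    induction n with
    | zero => exact hnext_mem U hU
    | succ n ih => simpa [seq, Function.iterate_succ_apply'] using hnext_mem _ ih
  have hseq_succ : ∀ n, seq (n + 1) = next (seq n) := fun n => by
    simp [seq, Function.iterate_succ_apply']
  have hseq_comp : ∀ n, seq (n + 1) ○ seq (n + 1) ⊆ seq n := fun n => by
    rw [hseq_succ]; exact hnext_comp _ (hseq_mem n)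
  have hanti : Antitone seq := antitone_nat_of_succ_le fun n =>
    (subset_comp_self_of_mem_uniformity (hseq_mem (n + 1))).trans (hseq_comp n)
  have hbasis := HasAntitoneBasis.iInf_principal hanti
  let core : UniformSpace.Core X := UniformSpace.Core.mk' (⨅ n, 𝓟 (seq n))
    (fun r hr x => by
      obtain ⟨n, -, hn⟩ := hbasis.1.mem_iff.1 hr
      exact hn (refl_mem_uniformity (hseq_mem n)))
    (fun r hr => by
      obtain ⟨n, -, hn⟩ := hbasis.1.mem_iff.1 hr
      refine mem_of_superset (hbasis.1.mem_of_mem trivial (i := n + 1)) fun p hp => hn ?_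
      have := hnext_symm _ (hseq_mem n)
      rw [← hseq_succ] at this
      exact hanti n.le_succ (SetRel.symm _ hp))
    (fun r hr => by
      obtain ⟨n, -, hn⟩ := hbasis.1.mem_iff.1 hr
      exact ⟨seq (n + 1), hbasis.1.mem_of_mem trivial, (hseq_comp n).trans hn⟩)
  obtain ⟨d, hd⟩ := @UniformSpace.metrizable_uniformity X (UniformSpace.ofCore core)
    (by change IsCountablyGenerated (⨅ n, 𝓟 (seq n)); infer_instance)
  refine ⟨d, ?_, ?_⟩ <;> rw [hd]
  · exact le_iInf fun n => le_principal_iff.2 (hseq_mem n)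
  · refine mem_of_superset (hbasis.1.mem_of_mem trivial (i := 0)) ?_
    exact (subset_comp_self_of_mem_uniformity (hseq_mem 0)).trans (hnext_comp U hU)

theorem exists_uniformContinuous_bump (x₀ : X) {U : Set (X × X)} (hU : U ∈ 𝓤 X) :
    ∃ u : X → ℝ, UniformContinuous u ∧ (∀ x, u x ∈ Set.Icc (0 : ℝ) 1) ∧ u x₀ = 1 ∧
      ∀ x, (x₀, x) ∉ U → u x = 0 := by
  obtain ⟨d, hle, hUd⟩ := exists_pseudoMetricSpace_of_mem_uniformity hU
  obtain ⟨ε, hε, hεU⟩ := (@Metric.mem_uniformity_dist X d U).1 hUd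
  set ρ : X → ℝ := fun x => @dist X d.toDist x₀ x
  have hρ : UniformContinuous ρ :=
    Tendsto.mono_left (@LipschitzWith.uniformContinuous X ℝ d.toPseudoEMetricSpace _ 1 ρ
      (@LipschitzWith.dist_right X d x₀)) hle
  have hρ0 : ∀ x, 0 ≤ ρ x := fun x => @dist_nonneg X d x₀ x
  refine ⟨fun x => max (1 - ε⁻¹ * ρ x) 0, lipschitzWith_max.uniformContinuous.comp
    ((uniformContinuous_const.sub (hρ.const_mul' ε⁻¹)).prodMk uniformContinuous_const),
    fun x => ⟨le_max_right _ _, max_le ?_ zero_le_one⟩, ?_, fun x hx => ?_⟩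
  · have := mul_nonneg (inv_nonneg.2 hε.le) (hρ0 x)
    linarith
  · simp [ρ]
  · have hεx : ε ≤ ρ x := not_lt.1 fun h => hx (hεU h)
    refine max_eq_right ?_
    rw [sub_nonpos, le_inv_mul_iff₀ hε, mul_one]
    exact hεx

end Bump

theorem UniformEquicontinuous.finset_sup' {ι X : Type*} [UniformSpace X] {F : ι → X → ℝ}
    (hF : UniformEquicontinuous F) :
    UniformEquicontinuous
      (fun s : {s : Finset ι // s.Nonempty} => fun x => s.1.sup' s.2 (F · x)) := by
  rw [Metric.uniformEquicontinuous_iff_right] at hF ⊢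
  intro ε hε
  have hsup : ∀ x y, (∀ i, dist (F i x) (F i y) < ε / 2) → ∀ s : {s : Finset ι // s.Nonempty},
      s.1.sup' s.2 (F · x) ≤ s.1.sup' s.2 (F · y) + ε / 2 := fun x y hxy s =>
    Finset.sup'_le _ _ fun i hi => by
      have := Finset.le_sup' (F · y) hi
      linarith [(abs_sub_lt_iff.1 (Real.dist_eq _ _ ▸ hxy i)).1]
  filter_upwards [hF (ε / 2) (half_pos hε)] with p hp s
  have hp' : ∀ i, dist (F i p.2) (F i p.1) < ε / 2 := fun i => dist_comm (F i p.1) _ ▸ hp i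
  rw [Real.dist_eq, abs_sub_lt_iff]
  constructor <;> linarith [hsup p.1 p.2 hp s, hsup p.2 p.1 hp' s]

theorem UniformEquicontinuous.insert_const_range {ι X α : Type*} [UniformSpace X]
    [UniformSpace α] {F : ι → X → α} (hF : UniformEquicontinuous F) (c : α) :
    (insert (fun _ => c) (Set.range F)).UniformEquicontinuous := by
  intro U hU
  filter_upwards [hF U hU] with p hp
  rintro ⟨f, rfl | ⟨i, rfl⟩⟩
  · exact refl_mem_uniformity hU
  · exact hp i

section InvariantMean

variable {G : Type*} [Group G] [UniformSpace G]

def IsLeftInvariantMean (m : (G → ℝ) → ℝ) : Prop :=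
  IsMeas m ∧ IsPositive m ∧ m (fun _ => 1) = 1 ∧
    ∀ (x : G) (f : G → ℝ), IsUb f → m (fun y => f (x * y)) = m f

def IsUniqueLeftInvariantMean (m : (G → ℝ) → ℝ) : Prop :=
  IsLeftInvariantMean m ∧ ∀ m', IsLeftInvariantMean m' → ∀ f, IsUb f → m' f = m f

/-- Normalised by its total mass, `σ` is itself a left-invariant mean (unless that mass
vanishes). -/
theorem IsUniqueLeftInvariantMean.eq_mul_of_isPositive {m σ : (G → ℝ) → ℝ}
    (hm : IsUniqueLeftInvariantMean m) (hσ : IsMeas σ) (hpos : IsPositive σ)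
    (hinv : ∀ (x : G) (f : G → ℝ), IsUb f → σ (fun y => f (x * y)) = σ f) {f : G → ℝ}
    (hf : IsUb f) : σ f = σ (fun _ => 1) * m f := by
  rcases (hpos _ (isUb_const 1) fun _ => zero_le_one).eq_or_lt with h0 | h0
  · obtain ⟨B, hB⟩ := hf.2
    have := hσ.abs_le_of_isPositive hpos hf hB
    rw [← h0, mul_zero, abs_nonpos_iff] at this
    rw [this, ← h0, zero_mul]
  · have hmean : IsLeftInvariantMean ((σ fun _ => 1)⁻¹ • σ) :=
      ⟨hσ.const_smul _, fun g hg hg0 => mul_nonneg (inv_nonneg.2 h0.le) (hpos g hg hg0),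
        inv_mul_cancel₀ h0.ne', fun x g hg => by simp only [Pi.smul_apply, hinv x g hg]⟩
    have := hm.2 _ hmean f hf
    rw [Pi.smul_apply, smul_eq_mul, inv_mul_eq_iff_eq_mul₀ h0.ne'] at this
    exact this

end InvariantMean

theorem sum_mul_translates_le_one {G : Type*} [Group G] {u : G → ℝ} {V : Set G}
    (hu1 : ∀ x, u x ≤ 1) (hsupp : ∀ x y, u x ≠ 0 → u y ≠ 0 → x⁻¹ * y ∈ V) {s : Finset G}
    (hs : ∀ a ∈ s, ∀ b ∈ s, a ≠ b → a⁻¹ * b ∉ V) (x : G) : ∑ a ∈ s, u (x * a) ≤ 1 := by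
  by_cases h : ∀ a ∈ s, u (x * a) = 0
  · rw [Finset.sum_eq_zero h]
    exact zero_le_one
  · obtain ⟨a, ha, hxa⟩ := not_forall₂.1 h
    rw [Finset.sum_eq_single_of_mem a ha fun b hb hba => by_contra fun hxb =>
      hs a ha b hb (Ne.symm hba) (by simpa [mul_assoc] using hsupp _ _ hxa hxb)]
    exact hu1 _

section RightUniformity

variable {G : Type*} [Group G] [TopologicalSpace G] [IsTopologicalGroup G]

attribute [local instance] IsTopologicalGroup.rightUniformSpace

theorem rightUniformSpace_uniformEquicontinuous_mul_const :
    UniformEquicontinuous (fun a : G => fun x : G => x * a) := by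
  intro U hU
  obtain ⟨V, hV, hVU⟩ := (uniformity_eq_comap_nhds_one' G ▸ hU :)
  filter_upwards [preimage_mem_comap (m := fun p : G × G => p.2 * p.1⁻¹) hV] with p hp a
  exact hVU (by simpa [mul_assoc] using hp)

theorem rightUniformSpace_uniformContinuous_const_mul (a : G) :
    UniformContinuous (fun x : G => a * x) := by
  rw [UniformContinuous, uniformity_eq_comap_nhds_one', tendsto_comap_iff]
  have hconj : Tendsto (fun g : G => a * g * a⁻¹) (𝓝 1) (𝓝 1) := by
    have hcont : Continuous (fun g : G => a * g * a⁻¹) := by fun_prop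
    simpa using hcont.tendsto 1
  refine (hconj.comp tendsto_comap).congr fun p => ?_
  simp [mul_assoc]

theorem IsUb.comp_mul_const {f : G → ℝ} (hf : IsUb f) (a : G) : IsUb (fun x => f (x * a)) :=
  hf.comp (rightUniformSpace_uniformEquicontinuous_mul_const.uniformContinuous a)

theorem IsUb.comp_const_mul {f : G → ℝ} (hf : IsUb f) (a : G) : IsUb (fun x => f (a * x)) :=
  hf.comp (rightUniformSpace_uniformContinuous_const_mul a)

theorem IsUb.semiuniform_mul {f : G → ℝ} (hf : IsUb f) :
    Semiuniform (fun p : G × G => f (p.1 * p.2)) := by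
  obtain ⟨C, hC⟩ := hf.2
  exact ⟨⟨C, fun p => hC _⟩,
    fun U hU => rightUniformSpace_uniformEquicontinuous_mul_const _ (hf.1 hU),
    fun x => (hf.comp_const_mul x).1⟩

variable {m ν : (G → ℝ) → ℝ}

theorem IsMeas.isUb_conv_apply (hν : IsMeas ν) {f : G → ℝ} (hf : IsUb f) :
    IsUb (fun x => ν (fun y => f (x * y))) :=
  hf.semiuniform_mul.isUb_apply hν

theorem isMeas_conv (hm : IsMeas m) (hν : IsMeas ν) : IsMeas (conv m ν) := by
  obtain ⟨Cm, -, hCm⟩ := hm.exists_abs_le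
  obtain ⟨Cν, hCν0, hCν⟩ := hν.exists_abs_le
  refine ⟨fun f g hf hg => ?_, fun c f hf => ?_, Cm * (Cν + 1), fun f hf h1 => ?_⟩
  · have : (fun x => ν (fun y => (f + g) (x * y))) =
        (fun x => ν (fun y => f (x * y))) + fun x => ν (fun y => g (x * y)) :=
      funext fun x => hν.map_add (hf.comp_const_mul x) (hg.comp_const_mul x)
    rw [conv, this, hm.map_add (hν.isUb_conv_apply hf) (hν.isUb_conv_apply hg)]
    rfl
  · have : (fun x => ν (fun y => (c • f) (x * y))) = c • fun x => ν (fun y => f (x * y)) :=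
      funext fun x => hν.map_smul c (hf.comp_const_mul x)
    rw [conv, this, hm.map_smul c (hν.isUb_conv_apply hf)]
    rfl
  · refine hCm _ (hν.isUb_conv_apply hf) _ (by positivity) fun x => ?_
    have := hCν _ (hf.comp_const_mul x) 1 one_pos fun y => h1 _
    linarith

theorem isPositive_conv (hm : IsPositive m) (hν : IsMeas ν) (hνpos : IsPositive ν) :
    IsPositive (conv m ν) := fun _ hf hf0 =>
  hm _ (hν.isUb_conv_apply hf) fun x =>
    hνpos _ (hf.comp_const_mul x) fun _ => hf0 _

theorem conv_mul_left (hm : ∀ (a : G) (f : G → ℝ), IsUb f → m (fun y => f (a * y)) = m f)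
    (hν : IsMeas ν) (a : G) {f : G → ℝ} (hf : IsUb f) :
    conv m ν (fun y => f (a * y)) = conv m ν f := by
  simp only [conv, ← mul_assoc]
  exact hm a _ (hν.isUb_conv_apply hf)

theorem IsUniqueLeftInvariantMean.mul_right {m : (G → ℝ) → ℝ}
    (hm : IsUniqueLeftInvariantMean m) (a : G) {f : G → ℝ} (hf : IsUb f) :
    m (fun x => f (x * a)) = m f := by
  obtain ⟨⟨hmeas, hpos, h1, hinv⟩, huniq⟩ := hm
  have hφ : UniformContinuous (fun x : G => x * a) :=
    rightUniformSpace_uniformEquicontinuous_mul_const.uniformContinuous a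
  refine huniq (fun g => m (g ∘ fun x => x * a)) ⟨hmeas.comp_uniformContinuous hφ,
    fun g hg hg0 => hpos _ (hg.comp hφ) fun _ => hg0 _, h1, fun b g hg => ?_⟩ f hf
  simpa [Function.comp_def, mul_assoc] using hinv b _ (hg.comp_mul_const a)

theorem IsUniqueLeftInvariantMean.conv_eq (hm : IsUniqueLeftInvariantMean m) (hν : IsMeas ν)
    {f : G → ℝ} (hf : IsUb f) : conv m ν f = ν (fun _ => 1) * m f := by
  have hmeas := hm.1.1
  have hpart : ∀ ν' : (G → ℝ) → ℝ, IsMeas ν' → IsPositive ν' →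
      conv m ν' f = ν' (fun _ => 1) * m f := fun ν' hν' hpos' => by
    rw [hm.eq_mul_of_isPositive (isMeas_conv hmeas hν') (isPositive_conv hm.1.2.1 hν' hpos')
      (fun a g hg => conv_mul_left hm.1.2.2.2 hν' a hg) hf]
    change m (fun _ => ν' fun _ => 1) * m f = _
    rw [hmeas.map_const, hm.1.2.2.1, mul_one]
  obtain ⟨ν₁, ν₂, hν₁, hpos₁, hν₂, hpos₂, hdecomp⟩ := hν.exists_isPositive_sub
  have : conv m ν f = conv m ν₁ f - conv m ν₂ f := by
    rw [conv, conv, conv, ← hmeas.map_sub (hν₁.isUb_conv_apply hf) (hν₂.isUb_conv_apply hf)]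
    exact congrArg m (funext fun x => hdecomp _ (hf.comp_const_mul x))
  rw [this, hpart ν₁ hν₁ hpos₁, hpart ν₂ hν₂ hpos₂, hdecomp _ (isUb_const 1)]
  ring

theorem IsUniqueLeftInvariantMean.continuous_conv (hm : IsUniqueLeftInvariantMean m) :
    Continuous[weakStarMeas G, _] (fun ν : {ν : (G → ℝ) → ℝ // IsMeas ν} =>
      fun f : {f : G → ℝ // IsUb f} => conv m ν.1 f.1) := by
  have : (fun ν : {ν : (G → ℝ) → ℝ // IsMeas ν} => fun f : {f : G → ℝ // IsUb f} =>
      conv m ν.1 f.1) = fun ν f => ν.1 (fun _ => 1) * m f.1 :=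
    funext fun ν => funext fun f => hm.conv_eq ν.2 f.2
  rw [this]
  let _ : TopologicalSpace {ν : (G → ℝ) → ℝ // IsMeas ν} := weakStarMeas G
  have hval : Continuous fun (ν : {ν : (G → ℝ) → ℝ // IsMeas ν}) (f : {f : G → ℝ // IsUb f}) =>
      ν.1 f.1 := continuous_induced_dom
  have hmass : Continuous fun ν : {ν : (G → ℝ) → ℝ // IsMeas ν} => ν.1 (fun _ => 1) :=
    (continuous_apply (⟨fun _ => 1, isUb_const 1⟩ : {f : G → ℝ // IsUb f})).comp' hval
  exact continuous_pi fun f => hmass.mul continuous_const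

theorem exists_separated_finset_of_not_totallyBounded
    (h : ¬TotallyBounded (Set.univ : Set G)) :
    ∃ V ∈ 𝓝 (1 : G), ∀ n : ℕ, ∃ s : Finset G, s.card = n ∧
      ∀ a ∈ s, ∀ b ∈ s, a ≠ b → a⁻¹ * b ∉ V := by
  have hbasis : (𝓤 G).HasBasis (fun V : Set G => V ∈ 𝓝 (1 : G))
      fun V => {p : G × G | p.2 * p.1⁻¹ ∈ V} := (𝓝 (1 : G)).basis_sets.comap _
  rw [hbasis.totallyBounded_iff] at h
  simp only [not_forall] at h
  obtain ⟨V, hV, hcover⟩ := h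
  obtain ⟨z, hz⟩ := Set.seq_of_forall_finite_exists
    (P := fun x t => ∀ y ∈ t, y * x⁻¹ ∉ V) fun t ht => by
      obtain ⟨x, -, hx⟩ := Set.not_subset.1 fun hsub => hcover ⟨t, ht, hsub⟩
      exact ⟨x, fun y hy hyx => hx (Set.mem_biUnion hy hyx)⟩
  have hsep : ∀ k l, k ≠ l → (z k)⁻¹⁻¹ * (z l)⁻¹ ∉ V ∩ V⁻¹ := by
    intro k l hkl hmem
    rw [inv_inv] at hmem
    rcases hkl.lt_or_gt with hkl | hkl
    · exact hz l _ ⟨k, hkl, rfl⟩ hmem.1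
    · exact hz k _ ⟨l, hkl, rfl⟩ (by simpa using hmem.2)
  have h1 : (1 : G) ∈ V ∩ V⁻¹ := ⟨mem_of_mem_nhds hV, by simpa using mem_of_mem_nhds hV⟩
  have hinj : Function.Injective fun n => (z n)⁻¹ := fun k l hkl => by
    by_contra hne
    exact hsep k l hne (by simpa [hkl] using h1)
  refine ⟨V ∩ V⁻¹, inter_mem hV (inv_mem_nhds_one G hV), fun n =>
    ⟨(Finset.range n).map ⟨_, hinj⟩, by simp, ?_⟩⟩
  simp only [Finset.mem_map, Function.Embedding.coeFn_mk]
  rintro _ ⟨k, -, rfl⟩ _ ⟨l, -, rfl⟩ hne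
  exact hsep k l fun h => hne (h ▸ rfl)

theorem IsMeas.eq_zero_of_sum_mul_translates_le_one {m : (G → ℝ) → ℝ} (hm : IsMeas m)
    (hpos : IsPositive m) (h1 : m (fun _ => 1) = 1) {u : G → ℝ} (hu : IsUb u)
    (hu0 : ∀ x, 0 ≤ u x) (hright : ∀ a, m (fun x => u (x * a)) = m u)
    (hsum : ∀ n : ℕ, ∃ s : Finset G, s.card = n ∧ ∀ x, ∑ a ∈ s, u (x * a) ≤ 1) : m u = 0 := by
  have hle : ∀ n : ℕ, (n : ℝ) * m u ≤ 1 := fun n => by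
    obtain ⟨s, rfl, hs⟩ := hsum n
    have hUb : ∀ a ∈ s, IsUb (fun x => u (x * a)) := fun a _ => hu.comp_mul_const a
    have := hm.mono hpos (IsUb.sum hUb) (isUb_const 1) fun x => by
      simpa [Finset.sum_apply] using hs x
    rw [hm.map_sum hUb, h1] at this
    simpa [hright] using this
  refine le_antisymm (not_lt.1 fun hpos' => ?_) (hpos u hu hu0)
  obtain ⟨n, hn⟩ := exists_nat_gt (1 / m u)
  rw [div_lt_iff₀ hpos'] at hn
  linarith [hle n]

/-- The finite suprema of right translates of `u` converge pointwise to `1`, while their means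
vanish. -/
theorem not_isUniformMeasure_of_mul_translates_null {m : (G → ℝ) → ℝ} (hm : IsMeas m)
    (hpos : IsPositive m) (h1 : m (fun _ => 1) = 1) {u : G → ℝ} (hu : UniformContinuous u)
    (hu01 : ∀ x, u x ∈ Set.Icc (0 : ℝ) 1) (hu_one : u 1 = 1)
    (hnull : ∀ a, m (fun x => u (x * a)) = 0) : ¬IsUniformMeasure m := by
  classical
  intro hUM
  set g : {s : Finset G // s.Nonempty} → G → ℝ := fun s x => s.1.sup' s.2 fun a => u (x * a)
  have hequi : UniformEquicontinuous g := UniformEquicontinuous.finset_sup'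
    (F := fun a x => u (x * a)) fun U hU =>
      rightUniformSpace_uniformEquicontinuous_mul_const _ (hu hU)
  have hg01 : ∀ s x, g s x ∈ Set.Icc (0 : ℝ) 1 := fun s x =>
    ⟨(hu01 _).1.trans (Finset.le_sup' (fun a => u (x * a)) s.2.choose_spec),
      Finset.sup'_le _ _ fun a _ => (hu01 _).2⟩
  have hmg : ∀ s, m (g s) = 0 := fun s =>
    hm.eq_zero_of_le_sum hpos (fun a _ => (hu.isUb_of_mem_Icc hu01).comp_mul_const a)
      (fun a _ => hnull a) ((hequi.uniformContinuous s).isUb_of_mem_Icc (hg01 s))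
      (fun x => (hg01 s x).1) fun x => by
        rw [Finset.sum_apply]
        exact Finset.sup'_le _ _ fun a ha =>
          Finset.single_le_sum (f := fun b => u (x * b)) (fun b _ => (hu01 (x * b)).1) ha
  have hbdd : ∀ f ∈ insert (fun _ => (1 : ℝ)) (Set.range g), ∀ x, |f x| ≤ 1 := by
    rintro f (rfl | ⟨s, rfl⟩) x
    · simp
    · exact abs_le.2 ⟨by linarith [(hg01 s x).1], (hg01 s x).2⟩
  obtain ⟨K, δ, hδ, hK⟩ := hUM _ ⟨1, hbdd⟩ (hequi.insert_const_range 1) _ (Set.mem_insert _ _)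
    (1 / 2) one_half_pos
  let s : {s : Finset G // s.Nonempty} := ⟨insert 1 (K.image (·⁻¹)), Finset.insert_nonempty _ _⟩
  have hsK : ∀ x ∈ K, g s x = 1 := fun x hx => le_antisymm (hg01 s x).2 <| by
    have := Finset.le_sup' (fun a => u (x * a))
      (Finset.mem_insert_of_mem (Finset.mem_image_of_mem (·⁻¹) hx) : x⁻¹ ∈ s.1)
    simpa [hu_one] using this
  have := hK (g s) (Set.mem_insert_of_mem _ ⟨s, rfl⟩) fun x hx => by simpa [hsK x hx] using hδ
  rw [hmg s, h1] at this
  norm_num at this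

end RightUniformity

theorem stmt17 {G : Type*} [Group G] [TopologicalSpace G] [IsTopologicalGroup G] :
    letI : UniformSpace G := IsTopologicalGroup.rightUniformSpace G
    -- (a) `G` is uniquely amenable: there is exactly one left-invariant mean on `Ub(rG)`
    ((∃ m : (G → ℝ) → ℝ, IsMeas m ∧ IsPositive m ∧ m (fun _ => 1) = 1 ∧
        ∀ (x : G) (f : G → ℝ), IsUb f → m (fun y => f (x * y)) = m f) ∧
      (∀ m m' : (G → ℝ) → ℝ,
        (IsMeas m ∧ IsPositive m ∧ m (fun _ => 1) = 1 ∧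
          ∀ (x : G) (f : G → ℝ), IsUb f → m (fun y => f (x * y)) = m f) →
        (IsMeas m' ∧ IsPositive m' ∧ m' (fun _ => 1) = 1 ∧
          ∀ (x : G) (f : G → ℝ), IsUb f → m' (fun y => f (x * y)) = m' f) →
        ∀ f : G → ℝ, IsUb f → m f = m' f)) →
    -- (b) every element of the topological centre of `Meas(rG)` is a uniform measure
    (∀ ξ : (G → ℝ) → ℝ, IsMeas ξ →
      @Continuous {ν : (G → ℝ) → ℝ // IsMeas ν} ({f : G → ℝ // IsUb f} → ℝ)
        (weakStarMeas G) _
        (fun ν => fun f => conv ξ ν.1 f.1) →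
      IsUniformMeasure ξ) →
    -- then `G` is precompact
    TotallyBounded (Set.univ : Set G) := by
  let _ : UniformSpace G := IsTopologicalGroup.rightUniformSpace G
  intro ⟨⟨m, hm⟩, huniq⟩ hcentre
  have hm' : IsUniqueLeftInvariantMean m := ⟨hm, fun m' hm' f hf => huniq m' m hm' hm f hf⟩
  have hUM : IsUniformMeasure m := hcentre m hm.1 hm'.continuous_conv
  by_contra hTB
  obtain ⟨V, hV, hsep⟩ := exists_separated_finset_of_not_totallyBounded hTB
  obtain ⟨W, hW, hWV⟩ := exists_nhds_split_inv hV
  obtain ⟨u, hu, hu01, hu_one, hu_supp⟩ := exists_uniformContinuous_bump (1 : G)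
    (preimage_mem_comap (m := fun p : G × G => p.2 * p.1⁻¹) (inv_mem_nhds_one G hW))
  have hsupp : ∀ x y, u x ≠ 0 → u y ≠ 0 → x⁻¹ * y ∈ V := fun x y hx hy => by
    have hx' := not_not.1 (mt (hu_supp x) hx)
    have hy' := not_not.1 (mt (hu_supp y) hy)
    simpa using hWV _ hx' _ hy'
  have huUb : IsUb u := hu.isUb_of_mem_Icc hu01
  have hmu : m u = 0 := hm.1.eq_zero_of_sum_mul_translates_le_one hm.2.1 hm.2.2.1 huUb
    (fun x => (hu01 x).1) (fun a => hm'.mul_right a huUb) fun n => (hsep n).imp fun s hs =>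
      ⟨hs.1, sum_mul_translates_le_one (fun x => (hu01 x).2) hsupp hs.2⟩
  exact not_isUniformMeasure_of_mul_translates_null hm.1 hm.2.1 hm.2.2.1 hu hu01 hu_one
    (fun a => (hm'.mul_right a huUb).trans hmu) hUM
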